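/- arXiv:2301.04384 — 2 statements merged into one kernel-verified Lean document; each statement's English description precedes it below -/
import Mathlib

section
/- Consider the control system NF₁₃ on ℝ⁵: ż₁ = v₁, ż₂ = z₃ + z₄v₁, ż₃ = a(z̄₄) + (−z₅ + b(z̄₄))v₁, ż₄ = z₅ + c(z̄₄)v₁, ż₅ = v₂, with flat output φ = (φ₁,φ₂) = (z₁,z₂), so that φ̇ = (v₁, z₃ + z₄v₁) as a function on the state-control space ℝ⁵ × ℝ². If χ: ℝ⁴ → ℝ is a smooth function such that the composed function (z,v) ↦ χ(z₁, z₂, v₁, z₃ + z₄v₁) does not depend on v (i.e., depends on z only), then χ(z₁, z₂, v₁, z₃ + z₄v₁) is a function of (z₁, z₂) alone. Consequently, span{dφ, dφ̇} ∩ span{dz₁,…,dz₅} = span{dz₁, dz₂}, so the four functions φ₁, φ₂, φ̇₁, φ̇₂ allow one to express only the two state variables z₁, z₂ (NF₁₃ is not x-maximally flat). -/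
/-!
Formalization framework for two-input control-affine systems
`ẋ = f(x) + u₁g₁(x) + u₂g₂(x)` on open subsets of ℝⁿ, flatness,
x-flatness, differential weight, static feedback equivalence,
static feedback linearization and linearization via prolongations,
following Nicolau–Gstöttner–Respondek, "Normal forms for x-flat
two-input control-affine systems in dimension five".
-/

noncomputable section

namespace ControlAffine

/-- A control-affine system `ẋ = f(x) + Σᵢ uᵢ gᵢ(x)` with `n` states and `m` controls. -/
structure CAS (n m : ℕ) where
  f : (Fin n → ℝ) → (Fin n → ℝ)
  g : Fin m → (Fin n → ℝ) → (Fin n → ℝ)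

variable {n m : ℕ}

/-- The control-dependent vector field `f(x) + Σᵢ uᵢ gᵢ(x)`. -/
def CAS.vf (S : CAS n m) (x : Fin n → ℝ) (u : Fin m → ℝ) : Fin n → ℝ :=
  S.f x + ∑ i, u i • S.g i x

/-- Smoothness of the defining vector fields on a set `X`. -/
def CAS.SmoothOn (S : CAS n m) (X : Set (Fin n → ℝ)) : Prop :=
  ContDiffOn ℝ (⊤ : ℕ∞) S.f X ∧ ∀ i, ContDiffOn ℝ (⊤ : ℕ∞) (S.g i) X

/-- `(x, u)` is a trajectory of `S` remaining in `X`. -/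
def CAS.IsTrajOn (S : CAS n m) (X : Set (Fin n → ℝ))
    (x : ℝ → Fin n → ℝ) (u : ℝ → Fin m → ℝ) : Prop :=
  (∀ t, x t ∈ X) ∧ ∀ t, HasDerivAt x (S.vf (x t) (u t)) t

/-- The `L`-jet `(u, u̇, …, u^{(L-1)})` of a control at time `t`
(`L = 0` corresponds to `l = -1`, i.e. no control derivatives at all). -/
def ujet (L : ℕ) (u : ℝ → Fin m → ℝ) (t : ℝ) : Fin L → Fin m → ℝ :=
  fun k => iteratedDeriv k u t

/-- `φ`, a function of the state only, is an x-flat output of `S` at the point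
`(x₀, ubar₀)` (a state together with an `L`-jet of controls): there are a
neighborhood `O` of that point, and smooth maps `γ`, `δ` reconstructing the state
from the derivatives `φᵢ, φ̇ᵢ, …, φᵢ^{(sᵢ-1)}` and the control from
`φᵢ, φ̇ᵢ, …, φᵢ^{(sᵢ)}` along every smooth trajectory remaining over `O`. -/
def IsXFlatOutputAt (S : CAS n m) (X : Set (Fin n → ℝ)) (L : ℕ)
    (x₀ : Fin n → ℝ) (ubar₀ : Fin L → Fin m → ℝ)
    (φ : (Fin n → ℝ) → Fin m → ℝ) (s : Fin m → ℕ) : Prop :=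
  ∃ (O : Set ((Fin n → ℝ) × (Fin L → Fin m → ℝ)))
    (γ : ((i : Fin m) → Fin (s i) → ℝ) → Fin n → ℝ)
    (δ : ((i : Fin m) → Fin (s i + 1) → ℝ) → Fin m → ℝ),
    IsOpen O ∧ (x₀, ubar₀) ∈ O ∧ (∀ q ∈ O, Prod.fst q ∈ X) ∧
    ContDiff ℝ (⊤ : ℕ∞) γ ∧ ContDiff ℝ (⊤ : ℕ∞) δ ∧
    ∀ (x : ℝ → Fin n → ℝ) (u : ℝ → Fin m → ℝ), ContDiff ℝ (⊤ : ℕ∞) u →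
      S.IsTrajOn X x u → (∀ t, (x t, ujet L u t) ∈ O) →
      ∀ t, x t = γ (fun i k => iteratedDeriv k (fun τ => φ (x τ) i) t) ∧
           u t = δ (fun i k => iteratedDeriv k (fun τ => φ (x τ) i) t)

/-- `S` is x-flat at the point `(x₀, ubar₀)`. -/
def IsXFlatAt (S : CAS n m) (X : Set (Fin n → ℝ)) (L : ℕ)
    (x₀ : Fin n → ℝ) (ubar₀ : Fin L → Fin m → ℝ) : Prop :=
  ∃ (φ : (Fin n → ℝ) → Fin m → ℝ) (s : Fin m → ℕ),
    ContDiff ℝ (⊤ : ℕ∞) φ ∧ IsXFlatOutputAt S X L x₀ ubar₀ φ s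

/-- `S` is x-flat at `(x₀, ubar₀)` with an x-flat output of differential weight
`∑ᵢ (sᵢ + 1) = m + ∑ᵢ sᵢ` at most `w`. -/
def XFlatWeightLE (S : CAS n m) (X : Set (Fin n → ℝ)) (L : ℕ)
    (x₀ : Fin n → ℝ) (ubar₀ : Fin L → Fin m → ℝ) (w : ℕ) : Prop :=
  ∃ (φ : (Fin n → ℝ) → Fin m → ℝ) (s : Fin m → ℕ),
    ContDiff ℝ (⊤ : ℕ∞) φ ∧ IsXFlatOutputAt S X L x₀ ubar₀ φ s ∧
    ∑ i, (s i + 1) ≤ w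

/-- Local static feedback equivalence of `S` (around `x₀`, within `X`) and `S'`
(around `z₀`), via a local diffeomorphism `z = ψ(x)` and an invertible static
feedback `u = α(x) + β(x)v`; the additional predicate `P` allows to record
extra compatibility properties of the normalizing diffeomorphism `ψ`. -/
def LocallySFEThrough (S S' : CAS n m) (X : Set (Fin n → ℝ)) (x₀ z₀ : Fin n → ℝ)
    (P : Set (Fin n → ℝ) → ((Fin n → ℝ) → Fin n → ℝ) → Prop) : Prop :=
  ∃ (U : Set (Fin n → ℝ)) (ψ ψinv : (Fin n → ℝ) → Fin n → ℝ)
    (α : (Fin n → ℝ) → Fin m → ℝ) (β : (Fin n → ℝ) → Fin m → Fin m → ℝ),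
    IsOpen U ∧ x₀ ∈ U ∧ U ⊆ X ∧ ψ x₀ = z₀ ∧
    ContDiffOn ℝ (⊤ : ℕ∞) ψ U ∧ IsOpen (ψ '' U) ∧
    ContDiffOn ℝ (⊤ : ℕ∞) ψinv (ψ '' U) ∧ (∀ x ∈ U, ψinv (ψ x) = x) ∧
    ContDiffOn ℝ (⊤ : ℕ∞) α U ∧ ContDiffOn ℝ (⊤ : ℕ∞) (fun x => β x) U ∧
    (∀ x ∈ U, (Matrix.of (β x)).det ≠ 0) ∧
    (∀ x ∈ U, ∀ v : Fin m → ℝ,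
      fderiv ℝ ψ x (S.vf x fun i => α x i + ∑ j, β x i j * v j) = S'.vf (ψ x) v) ∧
    P U ψ

/-- Local static feedback equivalence of `S` around `x₀` and `S'` around `z₀`. -/
def LocallySFE (S S' : CAS n m) (X : Set (Fin n → ℝ)) (x₀ z₀ : Fin n → ℝ) : Prop :=
  LocallySFEThrough S S' X x₀ z₀ fun _ _ => True

/-- `S` is a linear controllable system `ż = Az + Bv` (Kalman rank condition). -/
def IsLinearControllable (S : CAS n m) : Prop :=
  ∃ (A : Matrix (Fin n) (Fin n) ℝ) (B : Matrix (Fin n) (Fin m) ℝ),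
    (∀ x, S.f x = A.mulVec x) ∧ (∀ j x, S.g j x = fun i => B i j) ∧
    Submodule.span ℝ
      {w : Fin n → ℝ | ∃ (k : ℕ) (j : Fin m), w = (A ^ k).mulVec fun i => B i j} = ⊤

/-- `S` is locally static feedback linearizable around `x₀` (within `X`). -/
def SFLinAt (S : CAS n m) (X : Set (Fin n → ℝ)) (x₀ : Fin n → ℝ) : Prop :=
  ∃ (S' : CAS n m) (z₀ : Fin n → ℝ), IsLinearControllable S' ∧ LocallySFE S S' X x₀ z₀

/-- The system obtained from `S` by the invertible static feedback
`u = α(x) + β(x)ũ`, i.e. `f̃ = f + gα`, `g̃ = gβ`. -/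
def feedback (S : CAS n m) (α : (Fin n → ℝ) → Fin m → ℝ)
    (β : (Fin n → ℝ) → Fin m → Fin m → ℝ) : CAS n m where
  f x := S.vf x (α x)
  g i x := ∑ j, β x j i • S.g j x

/-- The prolonged system `Σ^{(p,0)}`: the first control is replaced by a chain of
`p` integrators `ẏ₁ = y₂, …, ẏ_p = v₁` feeding `g₁`, the second control is kept;
for `p = 0` this is the system itself. -/
def prolong (S : CAS n 2) (p : ℕ) : CAS (n + p) 2 where
  f z :=
    Fin.append
      (fun i => S.f (fun i' => z (Fin.castAdd p i')) i +
        (if h : 0 < p then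
          z (Fin.natAdd n ⟨0, h⟩) * S.g 0 (fun i' => z (Fin.castAdd p i')) i
        else 0))
      (fun j : Fin p =>
        if h : (j : ℕ) + 1 < p then z (Fin.natAdd n ⟨(j : ℕ) + 1, h⟩) else 0)
  g c :=
    if c = 0 then fun z =>
      Fin.append
        (fun i => if 0 < p then 0 else S.g 0 (fun i' => z (Fin.castAdd p i')) i)
        (fun j : Fin p => if (j : ℕ) + 1 = p then 1 else 0)
    else fun z =>
      Fin.append
        (fun i => S.g 1 (fun i' => z (Fin.castAdd p i')) i)
        (fun _ : Fin p => 0)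

/-- The cylinder `X × ℝᵖ` over a set of states, as a set of prolonged states. -/
def cylinder (X : Set (Fin n → ℝ)) (p : ℕ) : Set (Fin (n + p) → ℝ) :=
  {z | (fun i => z (Fin.castAdd p i)) ∈ X}

/-- `S` is dynamically linearizable, around `x₀`, via an invertible `p`-fold
prolongation: an invertible static feedback `u = α(x) + β(x)ũ` (defined near `x₀`)
brings `S` to a system whose `p`-fold prolongation of the first control is locally
static feedback linearizable. -/
def DynLinProlongAt (S : CAS n 2) (X : Set (Fin n → ℝ)) (x₀ : Fin n → ℝ)
    (p : ℕ) : Prop :=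
  ∃ (α : (Fin n → ℝ) → Fin 2 → ℝ) (β : (Fin n → ℝ) → Fin 2 → Fin 2 → ℝ)
    (U : Set (Fin n → ℝ)) (y₀ : Fin p → ℝ),
    IsOpen U ∧ x₀ ∈ U ∧ U ⊆ X ∧
    ContDiffOn ℝ (⊤ : ℕ∞) α U ∧ ContDiffOn ℝ (⊤ : ℕ∞) (fun x => β x) U ∧
    (∀ x ∈ U, (Matrix.of (β x)).det ≠ 0) ∧
    SFLinAt (prolong (feedback S α β) p) (cylinder U p) (Fin.append x₀ y₀)

/-- Lie bracket of two vector fields on ℝⁿ. -/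
def lieBracket (f g : (Fin n → ℝ) → Fin n → ℝ) (x : Fin n → ℝ) : Fin n → ℝ :=
  fderiv ℝ g x (f x) - fderiv ℝ f x (g x)

/-- Generators of the distributions `D⁰ = span{g₁,…,g_m}`,
`D^{j+1} = D^j + [f, D^j]`. -/
def distGens (S : CAS n m) : ℕ → Set ((Fin n → ℝ) → Fin n → ℝ)
  | 0 => Set.range S.g
  | j + 1 => distGens S j ∪ lieBracket S.f '' distGens S j

/-- Assumption (A): all the ranks involved (of the distributions
`D⁰ ⊂ D¹ ⊂ D² ⊂ …`) are constant around the given point. -/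
def AssumptionA (S : CAS n m) (x₀ : Fin n → ℝ) : Prop :=
  ∀ j : ℕ, ∃ (r : ℕ) (U : Set (Fin n → ℝ)), IsOpen U ∧ x₀ ∈ U ∧
    ∀ x ∈ U, Module.finrank ℝ
      (Submodule.span ℝ {w : Fin n → ℝ | ∃ h ∈ distGens S j, w = h x}) = r

/-- Restriction `z̄₄ = (z₁, z₂, z₃, z₄)` of a state in ℝ⁵. -/
def head4 (z : Fin 5 → ℝ) : Fin 4 → ℝ := fun i => z (Fin.castLE (by norm_num) i)

/-- Restriction `z̄₃ = (z₁, z₂, z₃)` of a state in ℝ⁵. -/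
def head3 (z : Fin 5 → ℝ) : Fin 3 → ℝ := fun i => z (Fin.castLE (by norm_num) i)

/-- The partial derivative `∂F/∂zᵢ` at `z`. -/
def pd {k : ℕ} (F : (Fin k → ℝ) → ℝ) (i : Fin k) (z : Fin k → ℝ) : ℝ :=
  deriv (fun t => F (Function.update z i t)) (z i)

/-- The normal form `NF`:
`ż₁ = v₁, ż₂ = z₃, ż₃ = b₁(z̄₄) + b₂(z̄₄)v₁, ż₄ = a₁(z) + a₂(z)v₁, ż₅ = v₂`. -/
def NF (b₁ b₂ : (Fin 4 → ℝ) → ℝ) (a₁ a₂ : (Fin 5 → ℝ) → ℝ) : CAS 5 2 where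
  f z := ![0, z 2, b₁ (head4 z), a₁ z, 0]
  g := ![fun z => ![1, 0, b₂ (head4 z), a₂ z, 0], fun _ => ![0, 0, 0, 0, 1]]

/-- The normal form `NF'`:
`ż₁ = z₂, ż₂ = v₁, ż₃ = b₁(z̄₄) + b₂(z̄₄)v₁, ż₄ = a₁(z) + a₂(z)v₁, ż₅ = v₂`. -/
def NF' (b₁ b₂ : (Fin 4 → ℝ) → ℝ) (a₁ a₂ : (Fin 5 → ℝ) → ℝ) : CAS 5 2 where
  f z := ![z 1, 0, b₁ (head4 z), a₁ z, 0]
  g := ![fun z => ![0, 1, b₂ (head4 z), a₂ z, 0], fun _ => ![0, 0, 0, 0, 1]]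

/-- The normal form `NF₇`:
`ż₁ = z₂, ż₂ = z₃, ż₃ = v₁, ż₄ = a₁(z) + (z₅ - z₅₀)v₁, ż₅ = v₂`. -/
def NF7 (a₁ : (Fin 5 → ℝ) → ℝ) (z₅₀ : ℝ) : CAS 5 2 where
  f z := ![z 1, z 2, 0, a₁ z, 0]
  g := ![fun z => ![0, 0, 1, z 4 - z₅₀, 0], fun _ => ![0, 0, 0, 0, 1]]

/-- The normal form `NF''`:
`ż₁ = v₁, ż₂ = c₁(z̄₃) + c₂(z̄₃)v₁, ż₃ = b₁(z̄₄) + b₂(z̄₄)v₁,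
 ż₄ = a₁(z) + a₂(z)v₁, ż₅ = v₂`. -/
def NF'' (c₁ c₂ : (Fin 3 → ℝ) → ℝ) (b₁ b₂ : (Fin 4 → ℝ) → ℝ)
    (a₁ a₂ : (Fin 5 → ℝ) → ℝ) : CAS 5 2 where
  f z := ![0, c₁ (head3 z), b₁ (head4 z), a₁ z, 0]
  g := ![fun z => ![1, c₂ (head3 z), b₂ (head4 z), a₂ z, 0], fun _ => ![0, 0, 0, 0, 1]]

/-- The normal form `NF₁₃`:
`ż₁ = v₁, ż₂ = z₃ + z₄v₁, ż₃ = a(z̄₄) + (-z₅ + b(z̄₄))v₁,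
 ż₄ = z₅ + c(z̄₄)v₁, ż₅ = v₂`. -/
def NF13 (a b c : (Fin 4 → ℝ) → ℝ) : CAS 5 2 where
  f z := ![0, z 2, a (head4 z), z 4, 0]
  g := ![fun z => ![1, z 3, -z 4 + b (head4 z), c (head4 z), 0],
        fun _ => ![0, 0, 0, 0, 1]]

theorem apply_eq_apply_zero_zero_of_forall_apply_add_mul {F : ℝ → ℝ → ℝ}
    (hF : ∀ p q x x' : ℝ, F x (p + q * x) = F x' (p + q * x')) (x y : ℝ) :
    F x y = F 0 0 :=
  calc F x y = F 0 y := by simpa using hF y 0 x 0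
    _ = F (-y) 0 := by simpa using hF y 1 0 (-y)
    _ = F 0 0 := by simpa using hF 0 0 (-y) 0

theorem statement15_general (χ : (Fin 4 → ℝ) → ℝ)
    (hindep : ∀ (z : Fin 5 → ℝ) (v v' : Fin 2 → ℝ),
      χ ![z 0, z 1, v 0, z 2 + z 3 * v 0] = χ ![z 0, z 1, v' 0, z 2 + z 3 * v' 0]) :
    ∃ θ : ℝ → ℝ → ℝ, ∀ (z : Fin 5 → ℝ) (v : Fin 2 → ℝ),
      χ ![z 0, z 1, v 0, z 2 + z 3 * v 0] = θ (z 0) (z 1) := by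
  refine ⟨fun z₁ z₂ => χ ![z₁, z₂, 0, 0], fun z v => ?_⟩
  have hline : ∀ p q x x' : ℝ,
      χ ![z 0, z 1, x, p + q * x] = χ ![z 0, z 1, x', p + q * x'] := fun p q x x' => by
    simpa using hindep ![z 0, z 1, p, q, 0] ![x, 0] ![x', 0]
  exact apply_eq_apply_zero_zero_of_forall_apply_add_mul (F := fun x y => χ ![z 0, z 1, x, y])
    hline _ _

/-- For `NF₁₃` with flat output `φ = (z₁, z₂)`, one has
`φ̇ = (v₁, z₃ + z₄v₁)` on the state-control space. If a smooth function
`χ(φ₁, φ₂, φ̇₁, φ̇₂)` of `(φ, φ̇)`, viewed as a function of `(z, v)`, does not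
depend on `v`, then it is a function of `(z₁, z₂)` alone. Consequently
`span{dφ, dφ̇} ∩ span{dz} = span{dz₁, dz₂}`: the four functions
`φ₁, φ₂, φ̇₁, φ̇₂` allow one to express only the two state variables `z₁, z₂`
(`NF₁₃` is not x-maximally flat). -/
theorem statement15 (χ : (Fin 4 → ℝ) → ℝ) (hχ : ContDiff ℝ (⊤ : ℕ∞) χ)
    (hindep : ∀ (z : Fin 5 → ℝ) (v v' : Fin 2 → ℝ),
      χ ![z 0, z 1, v 0, z 2 + z 3 * v 0] = χ ![z 0, z 1, v' 0, z 2 + z 3 * v' 0]) :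
    ∃ θ : ℝ → ℝ → ℝ, ∀ (z : Fin 5 → ℝ) (v : Fin 2 → ℝ),
      χ ![z 0, z 1, v 0, z 2 + z 3 * v 0] = θ (z 0) (z 1) :=
  statement15_general χ hindep

end ControlAffine
end
end

section
/- Consider the control system NF₁₃ on ℝ⁵: ż₁ = v₁, ż₂ = z₃ + z₄v₁, ż₃ = a(z̄₄) + (−z₅ + b(z̄₄))v₁, ż₄ = z₅ + c(z̄₄)v₁, ż₅ = v₂, with a, b, c smooth. Along any trajectory with twice differentiable control v₁(t), the second time-derivative of φ₂ = z₂ satisfies φ̈₂ = a(z̄₄) + b(z̄₄)v₁ + c(z̄₄)v₁² + z₄v̇₁ (in particular, z₅ cancels), and the determinant of the Jacobian matrix of (φ̇₂, φ̈₂) with respect to (z₃, z₄) equals ∂a/∂z₄ − (∂a/∂z₃ − ∂b/∂z₄)v₁ − (∂b/∂z₃ − ∂c/∂z₄)v₁² − (∂c/∂z₃)v₁³ + v̇₁. Consequently, the rank condition rk ∂(φ̇₂,φ̈₂)/∂(z₃,z₄)(z₀, v₀, v̇₀) = 2 holds if and only if (∂a/∂z₄ − (∂a/∂z₃ − ∂b/∂z₄)v₁₀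 − (∂b/∂z₃ − ∂c/∂z₄)v₁₀² − (∂c/∂z₃)v₁₀³ + v̇₁₀)(z₀) ≠ 0. -/
/-!
Formalization framework for two-input control-affine systems
`ẋ = f(x) + u₁g₁(x) + u₂g₂(x)` on open subsets of ℝⁿ, flatness,
x-flatness, differential weight, static feedback equivalence,
static feedback linearization and linearization via prolongations,
following Nicolau–Gstöttner–Respondek, "Normal forms for x-flat
two-input control-affine systems in dimension five".
-/

noncomputable section

namespace ControlAffine

variable {n m : ℕ}

lemma hasDerivAt_pd {k : ℕ} (F : (Fin k → ℝ) → ℝ) (hF : ContDiff ℝ (⊤ : ℕ∞) F)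
    (w : Fin k → ℝ) (j : Fin k) :
    HasDerivAt (fun t => F (Function.update w j t)) (pd F j w) (w j) := by
  have h1 : DifferentiableAt ℝ (fun t => F (Function.update w j t)) (w j) :=
    (hF.differentiable (by simp) _).comp _ (hasDerivAt_update w j (w j)).differentiableAt
  exact h1.hasDerivAt

lemma head4_update2 (z : Fin 5 → ℝ) (t : ℝ) :
    head4 (Function.update z 2 t) = Function.update (head4 z) 2 t := by
  funext j
  fin_cases j <;> simp only [head4, Function.update_apply, Fin.ext_iff] <;> rfl

lemma head4_update3 (z : Fin 5 → ℝ) (t : ℝ) :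
    head4 (Function.update z 3 t) = Function.update (head4 z) 3 t := by
  funext j
  fin_cases j <;> simp only [head4, Function.update_apply, Fin.ext_iff] <;> rfl

lemma rank2_iff_det_ne_zero (M : Matrix (Fin 2) (Fin 2) ℝ) :
    M.rank = 2 ↔ M.det ≠ 0 := by
  constructor
  · intro h hdet
    obtain ⟨v, hvne, hmv⟩ := Matrix.exists_mulVec_eq_zero_iff.2 hdet
    have hker : LinearMap.ker M.mulVecLin ≠ ⊥ := by
      intro hk
      have hinj := LinearMap.ker_eq_bot.1 hk
      exact hvne (hinj (show M.mulVecLin v = M.mulVecLin 0 by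
        simpa [Matrix.mulVecLin_apply] using hmv))
    have hkf : Module.finrank ℝ (LinearMap.ker M.mulVecLin) ≠ 0 := by
      intro h0
      exact hker (Submodule.finrank_eq_zero.1 h0)
    have hsum := LinearMap.finrank_range_add_finrank_ker M.mulVecLin
    simp only [Module.finrank_pi, Fintype.card_fin] at hsum
    have hrank : M.rank = Module.finrank ℝ (LinearMap.range M.mulVecLin) := rfl
    omega
  · intro h
    exact Matrix.rank_of_isUnit M ((Matrix.isUnit_iff_isUnit_det M).2 (isUnit_iff_ne_zero.2 h))

/-- For `NF₁₃`: along any trajectory with differentiable control `v₁(t)`, the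
second time-derivative of `φ₂ = z₂` equals
`a(z̄₄) + b(z̄₄)v₁ + c(z̄₄)v₁² + z₄v̇₁` (in particular `z₅` cancels); the
Jacobian determinant of `(φ̇₂, φ̈₂)` with respect to `(z₃, z₄)` equals
`∂a/∂z₄ - (∂a/∂z₃ - ∂b/∂z₄)v₁ - (∂b/∂z₃ - ∂c/∂z₄)v₁² - (∂c/∂z₃)v₁³ + v̇₁`;
consequently the rank condition `rk ∂(φ̇₂,φ̈₂)/∂(z₃,z₄) = 2` holds iff that
quantity is nonzero. -/
theorem statement16 (a b c : (Fin 4 → ℝ) → ℝ)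
    (ha : ContDiff ℝ (⊤ : ℕ∞) a) (hb : ContDiff ℝ (⊤ : ℕ∞) b)
    (hc : ContDiff ℝ (⊤ : ℕ∞) c) :
    -- (1) the second time-derivative of φ₂ = z₂ along trajectories
    (∀ (z : ℝ → Fin 5 → ℝ) (v : ℝ → Fin 2 → ℝ) (v' : ℝ → ℝ),
      (NF13 a b c).IsTrajOn Set.univ z v →
      (∀ t, HasDerivAt (fun τ => v τ 0) (v' t) t) →
      ∀ t, HasDerivAt (deriv fun τ => z τ 1)
        (a (head4 (z t)) + b (head4 (z t)) * v t 0
          + c (head4 (z t)) * (v t 0) ^ 2 + z t 3 * v' t) t) ∧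
    -- (2) the Jacobian determinant of (φ̇₂, φ̈₂) with respect to (z₃, z₄)
    (∀ (z₀ : Fin 5 → ℝ) (v₁ v₁' : ℝ),
      pd (fun z => z 2 + z 3 * v₁) 2 z₀ *
        pd (fun z => a (head4 z) + b (head4 z) * v₁
          + c (head4 z) * v₁ ^ 2 + z 3 * v₁') 3 z₀
      - pd (fun z => z 2 + z 3 * v₁) 3 z₀ *
        pd (fun z => a (head4 z) + b (head4 z) * v₁
          + c (head4 z) * v₁ ^ 2 + z 3 * v₁') 2 z₀
      = pd a 3 (head4 z₀) - (pd a 2 (head4 z₀) - pd b 3 (head4 z₀)) * v₁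
        - (pd b 2 (head4 z₀) - pd c 3 (head4 z₀)) * v₁ ^ 2
        - pd c 2 (head4 z₀) * v₁ ^ 3 + v₁') ∧
    -- (3) the rank condition
    (∀ (z₀ : Fin 5 → ℝ) (v₁ v₁' : ℝ),
      (!![pd (fun z => z 2 + z 3 * v₁) 2 z₀, pd (fun z => z 2 + z 3 * v₁) 3 z₀;
          pd (fun z => a (head4 z) + b (head4 z) * v₁
            + c (head4 z) * v₁ ^ 2 + z 3 * v₁') 2 z₀,
          pd (fun z => a (head4 z) + b (head4 z) * v₁
            + c (head4 z) * v₁ ^ 2 + z 3 * v₁') 3 z₀] :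
        Matrix (Fin 2) (Fin 2) ℝ).rank = 2 ↔
      pd a 3 (head4 z₀) - (pd a 2 (head4 z₀) - pd b 3 (head4 z₀)) * v₁
        - (pd b 2 (head4 z₀) - pd c 3 (head4 z₀)) * v₁ ^ 2
        - pd c 2 (head4 z₀) * v₁ ^ 3 + v₁' ≠ 0) := by
  classical
  -- component formulas for the vector field
  have hvf1 : ∀ (zz : Fin 5 → ℝ) (vv : Fin 2 → ℝ),
      (NF13 a b c).vf zz vv 1 = zz 2 + zz 3 * vv 0 := by
    intro zz vv; simp [NF13, CAS.vf, Fin.sum_univ_two]; ring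
  have hvf2 : ∀ (zz : Fin 5 → ℝ) (vv : Fin 2 → ℝ),
      (NF13 a b c).vf zz vv 2 = a (head4 zz) + (-zz 4 + b (head4 zz)) * vv 0 := by
    intro zz vv; simp [NF13, CAS.vf, Fin.sum_univ_two]; ring
  have hvf3 : ∀ (zz : Fin 5 → ℝ) (vv : Fin 2 → ℝ),
      (NF13 a b c).vf zz vv 3 = zz 4 + c (head4 zz) * vv 0 := by
    intro zz vv; simp [NF13, CAS.vf, Fin.sum_univ_two]; ring
  -- partial derivative computations
  have hpd1 : ∀ (z₀ : Fin 5 → ℝ) (v₁ : ℝ),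
      pd (fun z => z 2 + z 3 * v₁) 2 z₀ = 1 := by
    intro z₀ v₁
    have h : (fun t => (Function.update z₀ 2 t) 2 + (Function.update z₀ 2 t) 3 * v₁)
        = fun t => t + z₀ 3 * v₁ := by
      funext t
      simp [Function.update_of_ne (show (3 : Fin 5) ≠ 2 by decide)]
    simp only [pd]
    rw [h]
    exact ((hasDerivAt_id _).add_const _).deriv
  have hpd2 : ∀ (z₀ : Fin 5 → ℝ) (v₁ : ℝ),
      pd (fun z => z 2 + z 3 * v₁) 3 z₀ = v₁ := by
    intro z₀ v₁
    have h : (fun t => (Function.update z₀ 3 t) 2 + (Function.update z₀ 3 t) 3 * v₁)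
        = fun t => z₀ 2 + t * v₁ := by
      funext t
      simp [Function.update_of_ne (show (2 : Fin 5) ≠ 3 by decide)]
    simp only [pd]
    rw [h]
    simpa using (((hasDerivAt_id (z₀ 3)).mul_const v₁).const_add (z₀ 2)).deriv
  have hpt2 : ∀ z₀ : Fin 5 → ℝ, head4 z₀ 2 = z₀ 2 := fun _ => rfl
  have hpt3 : ∀ z₀ : Fin 5 → ℝ, head4 z₀ 3 = z₀ 3 := fun _ => rfl
  have hG2 : ∀ (z₀ : Fin 5 → ℝ) (v₁ v₁' : ℝ),
      pd (fun z => a (head4 z) + b (head4 z) * v₁ + c (head4 z) * v₁ ^ 2 + z 3 * v₁') 2 z₀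
        = pd a 2 (head4 z₀) + pd b 2 (head4 z₀) * v₁ + pd c 2 (head4 z₀) * v₁ ^ 2 := by
    intro z₀ v₁ v₁'
    have h : (fun t => a (head4 (Function.update z₀ 2 t))
          + b (head4 (Function.update z₀ 2 t)) * v₁
          + c (head4 (Function.update z₀ 2 t)) * v₁ ^ 2
          + (Function.update z₀ 2 t) 3 * v₁')
        = fun t => a (Function.update (head4 z₀) 2 t)
          + b (Function.update (head4 z₀) 2 t) * v₁
          + c (Function.update (head4 z₀) 2 t) * v₁ ^ 2 + z₀ 3 * v₁' := by
      funext t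
      rw [head4_update2, Function.update_of_ne (show (3 : Fin 5) ≠ 2 by decide)]
    simp only [pd]
    rw [h]
    have H := (((hasDerivAt_pd a ha (head4 z₀) 2).add
        ((hasDerivAt_pd b hb (head4 z₀) 2).mul_const v₁)).add
        ((hasDerivAt_pd c hc (head4 z₀) 2).mul_const (v₁ ^ 2))).add_const (z₀ 3 * v₁')
    rw [hpt2 z₀] at H
    exact H.deriv
  have hG3 : ∀ (z₀ : Fin 5 → ℝ) (v₁ v₁' : ℝ),
      pd (fun z => a (head4 z) + b (head4 z) * v₁ + c (head4 z) * v₁ ^ 2 + z 3 * v₁') 3 z₀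
        = pd a 3 (head4 z₀) + pd b 3 (head4 z₀) * v₁ + pd c 3 (head4 z₀) * v₁ ^ 2 + v₁' := by
    intro z₀ v₁ v₁'
    have h : (fun t => a (head4 (Function.update z₀ 3 t))
          + b (head4 (Function.update z₀ 3 t)) * v₁
          + c (head4 (Function.update z₀ 3 t)) * v₁ ^ 2
          + (Function.update z₀ 3 t) 3 * v₁')
        = fun t => a (Function.update (head4 z₀) 3 t)
          + b (Function.update (head4 z₀) 3 t) * v₁
          + c (Function.update (head4 z₀) 3 t) * v₁ ^ 2 + t * v₁' := by
      funext t
      rw [head4_update3, Function.update_self]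
    simp only [pd]
    rw [h]
    have H := (((hasDerivAt_pd a ha (head4 z₀) 3).add
        ((hasDerivAt_pd b hb (head4 z₀) 3).mul_const v₁)).add
        ((hasDerivAt_pd c hc (head4 z₀) 3).mul_const (v₁ ^ 2))).add
        ((hasDerivAt_id' (x := head4 z₀ 3)).mul_const v₁')
    rw [hpt3 z₀] at H
    rw [HasDerivAt.deriv (f := fun t => a (Function.update (head4 z₀) 3 t) + b (Function.update (head4 z₀) 3 t) * v₁ + c (Function.update (head4 z₀) 3 t) * v₁ ^ 2 + t * v₁') H]
    simp only [pd]
    ring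
  -- the determinant identity
  have hdet : ∀ (z₀ : Fin 5 → ℝ) (v₁ v₁' : ℝ),
      pd (fun z => z 2 + z 3 * v₁) 2 z₀ *
        pd (fun z => a (head4 z) + b (head4 z) * v₁
          + c (head4 z) * v₁ ^ 2 + z 3 * v₁') 3 z₀
      - pd (fun z => z 2 + z 3 * v₁) 3 z₀ *
        pd (fun z => a (head4 z) + b (head4 z) * v₁
          + c (head4 z) * v₁ ^ 2 + z 3 * v₁') 2 z₀
      = pd a 3 (head4 z₀) - (pd a 2 (head4 z₀) - pd b 3 (head4 z₀)) * v₁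
        - (pd b 2 (head4 z₀) - pd c 3 (head4 z₀)) * v₁ ^ 2
        - pd c 2 (head4 z₀) * v₁ ^ 3 + v₁' := by
    intro z₀ v₁ v₁'
    rw [hpd1, hpd2, hG2, hG3]
    ring
  refine ⟨?_, hdet, ?_⟩
  · intro z v v' htraj hv' t
    have hz : ∀ s : ℝ, ∀ i, HasDerivAt (fun τ => z τ i) ((NF13 a b c).vf (z s) (v s) i) s :=
      fun s i => hasDerivAt_pi.1 (htraj.2 s) i
    have hd1 : (deriv fun τ => z τ 1) = fun s => z s 2 + z s 3 * v s 0 := by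
      funext s
      have h := hz s 1
      rw [hvf1] at h
      exact h.deriv
    rw [hd1]
    have h2 := hz t 2
    have h3 := hz t 3
    rw [hvf2] at h2
    rw [hvf3] at h3
    have H := h2.add (h3.mul (hv' t))
    have key : a (head4 (z t)) + b (head4 (z t)) * v t 0
        + c (head4 (z t)) * v t 0 ^ 2 + z t 3 * v' t
        = a (head4 (z t)) + (-z t 4 + b (head4 (z t))) * v t 0
          + ((z t 4 + c (head4 (z t)) * v t 0) * v t 0 + z t 3 * v' t) := by ring
    rw [key]
    exact H
  · intro z₀ v₁ v₁'
    rw [rank2_iff_det_ne_zero, Matrix.det_fin_two_of, hdet z₀ v₁ v₁']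

end ControlAffine
end
end
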